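/- arXiv:1910.12598 — 3 statements merged into one kernel-verified Lean document; each statement's English description precedes it below -/
import Mathlib

section
/- Let G be a finite simple graph, let D be an orientation of G, and let η(v) = d⁺_D(v) be the out-degree of v in D. Then the coefficient c_{P_G,η} of the monomial ∏_v x_v^{η(v)} in the graph polynomial P_G equals ± diff(D); in particular c_{P_G,η} ≠ 0 if and only if D is Alon–Tarsi. -/
/-- Out-degree of `v` in the digraph with arc set `A`. -/
def outdeg {V : Type*} [DecidableEq V] (A : Finset (V × V)) (v : V) : ℕ :=
  (A.filter fun a => a.1 = v).card

/-- In-degree of `v` in the digraph with arc set `A`. -/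
def indeg {V : Type*} [DecidableEq V] (A : Finset (V × V)) (v : V) : ℕ :=
  (A.filter fun a => a.2 = v).card

/-- The spanning Eulerian sub-digraphs of the digraph with arc set `D`:
sub-digraphs (on the same vertex set) in which every vertex has equal
in-degree and out-degree. -/
def eulerSubs {V : Type*} [Fintype V] [DecidableEq V] (D : Finset (V × V)) :
    Finset (Finset (V × V)) :=
  D.powerset.filter fun A => ∀ v, indeg A v = outdeg A v

/-- `diffAT D` = (number of even spanning Eulerian sub-digraphs) −
(number of odd spanning Eulerian sub-digraphs). -/
def diffAT {V : Type*} [Fintype V] [DecidableEq V] (D : Finset (V × V)) : ℤ :=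
  (((eulerSubs D).filter fun A => Even A.card).card : ℤ) -
    (((eulerSubs D).filter fun A => ¬ Even A.card).card : ℤ)

/-- A digraph is Alon–Tarsi if `diffAT D ≠ 0`. -/
def IsAT {V : Type*} [Fintype V] [DecidableEq V] (D : Finset (V × V)) : Prop :=
  diffAT D ≠ 0

/-- `D` is an orientation of the simple graph `G`. -/
def IsOrientation {V : Type*} (G : SimpleGraph V) (D : Finset (V × V)) : Prop :=
  (∀ u v : V, G.Adj u v ↔ ((u, v) ∈ D ∨ (v, u) ∈ D)) ∧
    ∀ u v : V, ¬((u, v) ∈ D ∧ (v, u) ∈ D)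

/-- The graph polynomial `P_G = ∏_{uv ∈ E, u < v} (x_v − x_u)`. -/
noncomputable def graphPoly {V : Type*} [Fintype V] [LinearOrder V]
    (G : SimpleGraph V) [DecidableRel G.Adj] : MvPolynomial V ℝ :=
  ∏ p ∈ Finset.univ.filter (fun p : V × V => G.Adj p.1 p.2 ∧ p.1 < p.2),
    (MvPolynomial.X p.2 - MvPolynomial.X p.1)

/-! Expand `∏_{(u,v) ∈ D} (x_u - x_v)` by choosing, for each arc, its tail or minus its head.
If `t ⊆ D` is the set of arcs contributing their head, the term is
`(-1)^|t| x^(indeg t + outdeg (D \ t))`, and this exponent is `outdeg D` exactly when `t` is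
Eulerian; so the coefficient is `diff(D)`. Reversing arcs only flips signs, hence
`P_G = ± ∏_{(u,v) ∈ D} (x_u - x_v)`. -/

open Finset MvPolynomial

theorem Finset.prod_eq_or_eq_neg_prod {ι M : Type*} [CommMonoid M] [HasDistribNeg M]
    {s : Finset ι} {f g : ι → M} (h : ∀ i ∈ s, f i = g i ∨ f i = -g i) :
    ∏ i ∈ s, f i = ∏ i ∈ s, g i ∨ ∏ i ∈ s, f i = -∏ i ∈ s, g i := by
  induction s using Finset.cons_induction with
  | empty => simp
  | cons a s _ ih =>
    rw [prod_cons, prod_cons]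
    rcases h a (mem_cons_self a s) with ha | ha <;>
      rcases ih fun i hi => h i (mem_cons_of_mem hi) with hs | hs <;>
      simp [ha, hs]

theorem Finsupp.sum_single_one_apply {α σ : Type*} [DecidableEq σ] (s : Finset α) (f : α → σ)
    (v : σ) : (∑ a ∈ s, Finsupp.single (f a) 1) v = #{a ∈ s | f a = v} := by
  rw [Finsupp.finsetSum_apply, card_filter]
  exact Finset.sum_congr rfl fun a _ => Finsupp.single_apply

theorem MvPolynomial.prod_X_eq_monomial {V R α : Type*} [CommSemiring R] (s : Finset α)
    (f : α → V) :
    ∏ a ∈ s, (X (f a) : MvPolynomial V R) = monomial (∑ a ∈ s, Finsupp.single (f a) 1) 1 := by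
  rw [monomial_sum_one]
  rfl

namespace IsOrientation

variable {V : Type*} {G : SimpleGraph V} {D : Finset (V × V)}

theorem injOn_mk (hD : IsOrientation G D) : Set.InjOn (fun a : V × V => s(a.1, a.2)) D := by
  intro a ha b hb hab
  rcases Sym2.mk_eq_mk_iff.1 hab with h | rfl
  · exact h
  · exact absurd ⟨hb, ha⟩ (hD.2 b.1 b.2)

theorem image_mk [DecidableEq V] [Fintype G.edgeSet] (hD : IsOrientation G D) :
    D.image (fun a => s(a.1, a.2)) = G.edgeFinset := by
  ext e
  induction e using Sym2.ind with
  | h u v =>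
    simp only [mem_image, SimpleGraph.mem_edgeFinset, SimpleGraph.mem_edgeSet, hD.1 u v,
      Prod.exists, Sym2.eq_iff]
    aesop

theorem prod_mk_eq_prod_edgeFinset {M : Type*} [CommMonoid M] [DecidableEq V]
    [Fintype G.edgeSet] (hD : IsOrientation G D) (f : Sym2 V → M) :
    ∏ a ∈ D, f s(a.1, a.2) = ∏ e ∈ G.edgeFinset, f e := by
  rw [← hD.image_mk, prod_image hD.injOn_mk]

end IsOrientation

theorem isOrientation_filter_lt {V : Type*} [Fintype V] [LinearOrder V] (G : SimpleGraph V)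
    [DecidableRel G.Adj] :
    IsOrientation G (univ.filter fun p : V × V => G.Adj p.1 p.2 ∧ p.1 < p.2) := by
  refine ⟨fun u v => ?_, fun u v => ?_⟩
  · simp only [mem_filter, mem_univ, true_and]
    rcases lt_trichotomy u v with h | rfl | h
    · simp [h, h.not_gt]
    · simp
    · simp [h, h.not_gt, G.adj_comm]
  · simp only [mem_filter, mem_univ, true_and]
    exact fun ⟨⟨_, h⟩, ⟨_, h'⟩⟩ => lt_asymm h h'

theorem graphPoly_eq_prod_edgeFinset {V : Type*} [Fintype V] [LinearOrder V]
    (G : SimpleGraph V) [DecidableRel G.Adj] :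
    graphPoly G = ∏ e ∈ G.edgeFinset, (X e.sup - X e.inf) := by
  rw [graphPoly, ← (isOrientation_filter_lt G).prod_mk_eq_prod_edgeFinset]
  refine prod_congr rfl fun a ha => ?_
  have h : a.1 ≤ a.2 := (mem_filter.1 ha).2.2.le
  simp [h]

theorem IsOrientation.graphPoly_eq_or_eq_neg {V : Type*} [Fintype V] [LinearOrder V]
    {G : SimpleGraph V} [DecidableRel G.Adj] {D : Finset (V × V)} (hD : IsOrientation G D) :
    graphPoly G = ∏ a ∈ D, (X a.1 - X a.2) ∨ graphPoly G = -∏ a ∈ D, (X a.1 - X a.2) := by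
  rw [graphPoly_eq_prod_edgeFinset, ← hD.prod_mk_eq_prod_edgeFinset]
  refine Finset.prod_eq_or_eq_neg_prod fun a _ => ?_
  rcases le_total a.1 a.2 with h | h
  · simp [h]
  · simp [h]

section Coefficient

variable {V R : Type*} [DecidableEq V] [CommRing R]

theorem outdeg_add_outdeg_sdiff {A B : Finset (V × V)} (h : A ⊆ B) (v : V) :
    outdeg A v + outdeg (B \ A) v = outdeg B v := by
  rw [outdeg, outdeg, outdeg, card_filter, card_filter, card_filter, ← sum_sdiff h, add_comm]

theorem prod_X_sub_X_eq_sum_powerset (D : Finset (V × V)) :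
    ∏ a ∈ D, (X a.1 - X a.2 : MvPolynomial V R) =
      ∑ t ∈ D.powerset, monomial (∑ a ∈ t, Finsupp.single a.2 1 + ∑ a ∈ D \ t, Finsupp.single a.1 1)
        ((-1) ^ #t) := by
  calc ∏ a ∈ D, (X a.1 - X a.2 : MvPolynomial V R)
      = ∏ a ∈ D, (-X a.2 + X a.1) := by simp_rw [neg_add_eq_sub]
    _ = ∑ t ∈ D.powerset, (∏ a ∈ t, -X a.2) * ∏ a ∈ D \ t, X a.1 := prod_add _ _ _
    _ = _ := by
      refine sum_congr rfl fun t _ => ?_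
      rw [prod_neg, prod_X_eq_monomial, prod_X_eq_monomial, mul_assoc, monomial_mul, one_mul,
        ← map_one C, ← map_neg C, ← map_pow, C_mul_monomial, mul_one]

theorem intCast_diffAT [Fintype V] (D : Finset (V × V)) :
    (diffAT D : R) = ∑ t ∈ eulerSubs D, (-1) ^ #t := by
  rw [← sum_filter_add_sum_filter_not (eulerSubs D) (fun t => Even #t),
    sum_congr rfl fun t ht => (mem_filter.1 ht).2.neg_one_pow,
    sum_congr rfl fun t ht => (Nat.not_even_iff_odd.1 (mem_filter.1 ht).2).neg_one_pow]
  simp [diffAT, sub_eq_add_neg]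

theorem exponent_eq_outdeg_iff [Fintype V] {D t : Finset (V × V)} (ht : t ⊆ D) :
    ∑ a ∈ t, Finsupp.single a.2 1 + ∑ a ∈ D \ t, Finsupp.single a.1 1 =
        Finsupp.equivFunOnFinite.symm (fun v => outdeg D v) ↔
      ∀ v, indeg t v = outdeg t v := by
  refine Finsupp.ext_iff.trans (forall_congr' fun v => ?_)
  have hsplit := outdeg_add_outdeg_sdiff ht v
  rw [Finsupp.add_apply, Finsupp.sum_single_one_apply, Finsupp.sum_single_one_apply]
  change indeg t v + outdeg (D \ t) v = outdeg D v ↔ _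
  omega

theorem coeff_outdeg_prod_X_sub_X [Fintype V] (D : Finset (V × V)) :
    coeff (Finsupp.equivFunOnFinite.symm fun v => outdeg D v)
      (∏ a ∈ D, (X a.1 - X a.2 : MvPolynomial V R)) = diffAT D := by
  rw [prod_X_sub_X_eq_sum_powerset, coeff_sum, intCast_diffAT, eulerSubs, sum_filter]
  refine sum_congr rfl fun t ht => ?_
  rw [coeff_monomial, if_congr (exponent_eq_outdeg_iff (mem_powerset.1 ht)) rfl rfl]

end Coefficient

/-- The Alon–Tarsi theorem: for an orientation `D` of `G` and
`η(v) = d⁺_D(v)`, the coefficient of `∏ x_v^{η(v)}` in `P_G` equals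
`± diff(D)`; in particular it is nonzero iff `D` is Alon–Tarsi. -/
theorem alon_tarsi {V : Type*} [Fintype V] [LinearOrder V]
    (G : SimpleGraph V) [DecidableRel G.Adj]
    (D : Finset (V × V)) (hor : IsOrientation G D) :
    (MvPolynomial.coeff (Finsupp.equivFunOnFinite.symm fun v => outdeg D v)
          (graphPoly G) = (diffAT D : ℝ) ∨
      MvPolynomial.coeff (Finsupp.equivFunOnFinite.symm fun v => outdeg D v)
          (graphPoly G) = -(diffAT D : ℝ)) ∧
      (MvPolynomial.coeff (Finsupp.equivFunOnFinite.symm fun v => outdeg D v)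
          (graphPoly G) ≠ 0 ↔ IsAT D) := by
  rcases hor.graphPoly_eq_or_eq_neg with h | h <;> simp [h, coeff_outdeg_prod_X_sub_X, IsAT]
end

section
/- Let G be a minimum counterexample to Theorem: 'for l ∈ {5,6,7}, every G ∈ 𝒫_{4,l} with boundary vertex v₀ has a valid matching M such that G − M admits a good orientation'. Then G − {v₀} contains no two adjacent 3-vertices, i.e., there is no edge uv of G with d(u) = d(v) = 3 and u, v ≠ v₀. -/
/-- `H` is a minor of `G`: there are nonempty, pairwise disjoint, connected
branch sets in `G`, one for each vertex of `H`, with an edge of `G` between the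
branch sets of any two adjacent vertices of `H`. -/
def IsGraphMinor {W V : Type*} (H : SimpleGraph W) (G : SimpleGraph V) : Prop :=
  ∃ B : W → Set V, (∀ w, (B w).Nonempty) ∧ (∀ w, (G.induce (B w)).Connected) ∧
    (∀ w w', w ≠ w' → Disjoint (B w) (B w')) ∧
    ∀ w w', H.Adj w w' → ∃ u ∈ B w, ∃ v ∈ B w', G.Adj u v

/-- Planarity via Wagner's theorem: no `K₅` minor and no `K₃,₃` minor. -/
def IsPlanar {V : Type*} (G : SimpleGraph V) : Prop :=
  ¬ IsGraphMinor (SimpleGraph.completeGraph (Fin 5)) G ∧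
    ¬ IsGraphMinor (completeBipartiteGraph (Fin 3) (Fin 3)) G

/-- `G` contains a cycle of length `n`. -/
def HasCycleLength {V : Type*} (G : SimpleGraph V) (n : ℕ) : Prop :=
  ∃ (v : V) (w : G.Walk v v), w.IsCycle ∧ w.length = n

/-- `(G, v₀)` has a valid matching `M` (not covering `v₀`) such that `G − M`
admits a good orientation: an Alon–Tarsi orientation with all out-degrees `< 3`
and out-degree `0` at `v₀`. -/
def HasGoodMatching {V : Type*} [Fintype V] [DecidableEq V]
    (G : SimpleGraph V) (v₀ : V) : Prop :=
  ∃ M : G.Subgraph, M.IsMatching ∧ v₀ ∉ M.support ∧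
    ∃ D : Finset (V × V), IsOrientation (G.deleteEdges M.edgeSet) D ∧ IsAT D ∧
      (∀ v, outdeg D v < 3) ∧ outdeg D v₀ = 0

section ImageLemmas
variable {W V : Type*} [Fintype W] [DecidableEq W] [Fintype V] [DecidableEq V]
  {f : W → V}
set_option linter.unusedSectionVars false

lemma fmap_inj (hf : Function.Injective f) : Function.Injective (Prod.map f f) := by
  rintro ⟨a, b⟩ ⟨c, d⟩ h
  simp only [Prod.map, Prod.mk.injEq] at h
  exact Prod.ext (hf h.1) (hf h.2)

lemma outdeg_image (hf : Function.Injective f) (A : Finset (W × W)) (w : W) :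
    outdeg (A.image (Prod.map f f)) (f w) = outdeg A w := by
  unfold outdeg
  rw [Finset.filter_image, Finset.card_image_of_injective _ (fmap_inj hf)]
  congr 1
  apply Finset.filter_congr
  intro a _
  simp [Prod.map, hf.eq_iff]

lemma indeg_image (hf : Function.Injective f) (A : Finset (W × W)) (w : W) :
    indeg (A.image (Prod.map f f)) (f w) = indeg A w := by
  unfold indeg
  rw [Finset.filter_image, Finset.card_image_of_injective _ (fmap_inj hf)]
  congr 1
  apply Finset.filter_congr
  intro a _
  simp [Prod.map, hf.eq_iff]

lemma outdeg_image_not_range (A : Finset (W × W)) (v : V) (hv : ∀ w, f w ≠ v) :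
    outdeg (A.image (Prod.map f f)) v = 0 := by
  unfold outdeg
  rw [Finset.card_eq_zero, Finset.filter_eq_empty_iff]
  rintro a ha
  obtain ⟨b, _, rfl⟩ := Finset.mem_image.1 ha
  exact hv b.1

lemma indeg_image_not_range (A : Finset (W × W)) (v : V) (hv : ∀ w, f w ≠ v) :
    indeg (A.image (Prod.map f f)) v = 0 := by
  unfold indeg
  rw [Finset.card_eq_zero, Finset.filter_eq_empty_iff]
  rintro a ha
  obtain ⟨b, _, rfl⟩ := Finset.mem_image.1 ha
  exact hv b.2

lemma eulerSubs_image (hf : Function.Injective f) (D : Finset (W × W)) :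
    eulerSubs (D.image (Prod.map f f)) =
      (eulerSubs D).image (fun A => A.image (Prod.map f f)) := by
  ext B
  simp only [eulerSubs, Finset.mem_filter, Finset.mem_powerset, Finset.mem_image]
  constructor
  · rintro ⟨hsub, heul⟩
    refine ⟨D.filter (fun a => Prod.map f f a ∈ B), ⟨⟨Finset.filter_subset _ _, ?_⟩, ?_⟩⟩
    · intro w
      have hBA : (D.filter (fun a => Prod.map f f a ∈ B)).image (Prod.map f f) = B := by
        apply Finset.Subset.antisymm
        · intro b hb
          obtain ⟨a, ha, rfl⟩ := Finset.mem_image.1 hb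
          exact (Finset.mem_filter.1 ha).2
        · intro b hb
          obtain ⟨a, ha, rfl⟩ := Finset.mem_image.1 (hsub hb)
          exact Finset.mem_image.2 ⟨a, Finset.mem_filter.2 ⟨ha, hb⟩, rfl⟩
      have := heul (f w)
      rw [← hBA, indeg_image hf, outdeg_image hf] at this
      exact this
    · apply Finset.Subset.antisymm
      · intro b hb
        obtain ⟨a, ha, rfl⟩ := Finset.mem_image.1 hb
        exact (Finset.mem_filter.1 ha).2
      · intro b hb
        obtain ⟨a, ha, rfl⟩ := Finset.mem_image.1 (hsub hb)
        exact Finset.mem_image.2 ⟨a, Finset.mem_filter.2 ⟨ha, hb⟩, rfl⟩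
  · rintro ⟨A, ⟨hsub, heul⟩, rfl⟩
    refine ⟨Finset.image_subset_image hsub, ?_⟩
    intro v
    by_cases hv : ∃ w, f w = v
    · obtain ⟨w, rfl⟩ := hv
      rw [indeg_image hf, outdeg_image hf]; exact heul w
    · push_neg at hv
      rw [indeg_image_not_range _ v hv, outdeg_image_not_range _ v hv]

lemma diffAT_image (hf : Function.Injective f) (D : Finset (W × W)) :
    diffAT (D.image (Prod.map f f)) = diffAT D := by
  have hg : Function.Injective (fun A : Finset (W × W) => A.image (Prod.map f f)) :=
    Finset.image_injective (fmap_inj hf)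
  unfold diffAT
  rw [eulerSubs_image hf]
  have k1 : ((eulerSubs D).image (fun A => A.image (Prod.map f f))).filter
        (fun A => Even A.card) =
      ((eulerSubs D).filter (fun A => Even A.card)).image
        (fun A => A.image (Prod.map f f)) := by
    rw [Finset.filter_image]
    congr 1
    apply Finset.filter_congr
    intro A _
    simp [Finset.card_image_of_injective _ (fmap_inj hf)]
  have k2 : ((eulerSubs D).image (fun A => A.image (Prod.map f f))).filter
        (fun A => ¬ Even A.card) =
      ((eulerSubs D).filter (fun A => ¬ Even A.card)).image
        (fun A => A.image (Prod.map f f)) := by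
    rw [Finset.filter_image]
    congr 1
    apply Finset.filter_congr
    intro A _
    simp [Finset.card_image_of_injective _ (fmap_inj hf)]
  rw [k1, k2, Finset.card_image_of_injective _ hg, Finset.card_image_of_injective _ hg]

lemma isAT_image (hf : Function.Injective f) (D : Finset (W × W)) (h : IsAT D) : IsAT (D.image (Prod.map f f)) := by
  unfold IsAT
  rw [diffAT_image hf]; exact h

end ImageLemmas

lemma eulerSubs_union_sources {V : Type*} [Fintype V] [DecidableEq V]
    (D₀ E : Finset (V × V)) (p : V → Prop)
    (h1 : ∀ a ∈ D₀ ∪ E, ¬ p a.2) (h2 : ∀ a ∈ E, p a.1) :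
    eulerSubs (D₀ ∪ E) = eulerSubs D₀ := by
  ext A
  simp only [eulerSubs, Finset.mem_filter, Finset.mem_powerset]
  constructor
  · rintro ⟨hsub, heul⟩
    refine ⟨fun a ha => ?_, heul⟩
    rcases Finset.mem_union.1 (hsub ha) with h0 | hE
    · exact h0
    · exfalso
      have hp : p a.1 := h2 a hE
      have hind : indeg A a.1 = 0 := by
        rw [indeg, Finset.card_eq_zero, Finset.filter_eq_empty_iff]
        intro b hb hb2
        exact h1 b (hsub hb) (hb2 ▸ hp)
      have hout : outdeg A a.1 = 0 := (heul a.1).symm.trans hind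
      rw [outdeg, Finset.card_eq_zero, Finset.filter_eq_empty_iff] at hout
      exact hout ha rfl
  · rintro ⟨hsub, heul⟩
    exact ⟨hsub.trans Finset.subset_union_left, heul⟩

lemma isAT_union_sources {V : Type*} [Fintype V] [DecidableEq V]
    (D₀ E : Finset (V × V)) (p : V → Prop)
    (h1 : ∀ a ∈ D₀ ∪ E, ¬ p a.2) (h2 : ∀ a ∈ E, p a.1) (h : IsAT D₀) :
    IsAT (D₀ ∪ E) := by
  unfold IsAT diffAT at *
  rw [eulerSubs_union_sources D₀ E p h1 h2]; exact h

lemma isGraphMinor_comap {U α V : Type*} {K : SimpleGraph U} {G : SimpleGraph V}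
    {f : α → V} (hf : Function.Injective f) (h : IsGraphMinor K (G.comap f)) :
    IsGraphMinor K G := by
  obtain ⟨B, hne, hconn, hdisj, hedge⟩ := h
  refine ⟨fun w => f '' B w, fun w => (hne w).image f, fun w => ?_, ?_, ?_⟩
  · let φ : ((G.comap f).induce (B w)) →g (G.induce (f '' B w)) :=
      ⟨fun x => ⟨f x.1, ⟨x.1, x.2, rfl⟩⟩, fun h => h⟩
    have hsurj : Function.Surjective φ := by
      rintro ⟨y, x, hx, rfl⟩
      exact ⟨⟨x, hx⟩, rfl⟩
    exact (hconn w).map φ hsurj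
  · intro w w' hww
    apply Set.disjoint_image_image
    intro b hb c hc hbc
    exact Set.disjoint_left.1 (hdisj w w' hww) hb (hf hbc ▸ hc)
  · intro w w' hww
    obtain ⟨a, ha, b, hb, hab⟩ := hedge w w' hww
    exact ⟨f a, ⟨a, ha, rfl⟩, f b, ⟨b, hb, rfl⟩, hab⟩

lemma hasCycleLength_comap {α V : Type*} {G : SimpleGraph V} {f : α → V}
    (hf : Function.Injective f) {n : ℕ} (h : HasCycleLength (G.comap f) n) :
    HasCycleLength G n := by
  obtain ⟨v, w, hc, hl⟩ := h
  let φ : (G.comap f) →g G := ⟨f, fun h => h⟩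
  exact ⟨f v, w.map φ, hc.map hf, by rw [SimpleGraph.Walk.length_map]; exact hl⟩

/-- In a vertex-minimum counterexample `(G, v₀)` to the main theorem, there is
no edge joining two 3-vertices both different from `v₀`. -/
theorem min_counterexample_no_adjacent_three_vertices {V : Type*} [Fintype V]
    [DecidableEq V] (l : ℕ) (hl : l = 5 ∨ l = 6 ∨ l = 7)
    (G : SimpleGraph V) [DecidableRel G.Adj] (v₀ : V)
    (hplanar : IsPlanar G) (h4 : ¬ HasCycleLength G 4) (hlc : ¬ HasCycleLength G l)
    (hcex : ¬ HasGoodMatching G v₀)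
    (hmin : ∀ n : ℕ, n < Fintype.card V → ∀ H : SimpleGraph (Fin n), ∀ w₀ : Fin n,
      IsPlanar H → ¬ HasCycleLength H 4 → ¬ HasCycleLength H l →
        HasGoodMatching H w₀) :
    ¬ ∃ u v : V, G.Adj u v ∧ u ≠ v₀ ∧ v ≠ v₀ ∧
        G.degree u = 3 ∧ G.degree v = 3 := by
  rintro ⟨u, v, huv, hu0, hv0, hdu, hdv⟩
  classical
  have hne : u ≠ v := huv.ne
  have hNmem : ∀ x y : V, y ∈ G.neighborFinset x ↔ G.Adj x y := fun x y => by simp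
  let n := Fintype.card {x : V // x ≠ u ∧ x ≠ v}
  have hn : n < Fintype.card V := by
    apply Fintype.card_subtype_lt (x := u)
    simp
  let e : {x : V // x ≠ u ∧ x ≠ v} ≃ Fin n := Fintype.equivFin _
  let f : Fin n → V := fun i => (e.symm i : V)
  have hfinj : Function.Injective f := fun i j h => e.symm.injective (Subtype.ext h)
  have hfu : ∀ i, f i ≠ u := fun i => (e.symm i).2.1
  have hfv : ∀ i, f i ≠ v := fun i => (e.symm i).2.2
  have hfr : ∀ x : V, x ≠ u → x ≠ v → ∃ i, f i = x := fun x hx1 hx2 =>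
    ⟨e ⟨x, hx1, hx2⟩, by simp [f]⟩
  let H : SimpleGraph (Fin n) := G.comap f
  haveI : DecidableRel H.Adj := fun a b => Classical.dec _
  have hHp : IsPlanar H :=
    ⟨fun hm => hplanar.1 (isGraphMinor_comap hfinj hm),
     fun hm => hplanar.2 (isGraphMinor_comap hfinj hm)⟩
  have hH4 : ¬ HasCycleLength H 4 := fun hc => h4 (hasCycleLength_comap hfinj hc)
  have hHl : ¬ HasCycleLength H l := fun hc => hlc (hasCycleLength_comap hfinj hc)
  let w₀ : Fin n := e ⟨v₀, Ne.symm hu0, Ne.symm hv0⟩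
  have hfw₀ : f w₀ = v₀ := by simp [f, w₀]
  obtain ⟨M', hM'm, hw₀s, D', hD'or, hD'AT, hD'out, hD'v₀⟩ := hmin n hn H w₀ hHp hH4 hHl
  let M : G.Subgraph :=
    { verts := (f '' M'.verts) ∪ {u, v}
      Adj := fun a b => (a = u ∧ b = v) ∨ (a = v ∧ b = u) ∨
        ∃ i j, M'.Adj i j ∧ f i = a ∧ f j = b
      adj_sub := by
        rintro a b (⟨h1, h2⟩ | ⟨h1, h2⟩ | ⟨i, j, hij, rfl, rfl⟩)
        · rw [h1, h2]; exact huv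
        · rw [h1, h2]; exact huv.symm
        · exact M'.adj_sub hij
      edge_vert := by
        rintro a b (⟨h1, -⟩ | ⟨h1, -⟩ | ⟨i, j, hij, rfl, rfl⟩)
        · rw [h1]; simp
        · rw [h1]; simp
        · exact Set.mem_union_left _ ⟨i, M'.edge_vert hij, rfl⟩
      symm := by
        constructor
        rintro a b (⟨h1, h2⟩ | ⟨h1, h2⟩ | ⟨i, j, hij, rfl, rfl⟩)
        · exact Or.inr (Or.inl ⟨h2, h1⟩)
        · exact Or.inl ⟨h2, h1⟩
        · exact Or.inr (Or.inr ⟨j, i, hij.symm, rfl, rfl⟩) }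
  have hMadj : ∀ a b : V, M.Adj a b ↔ ((a = u ∧ b = v) ∨ (a = v ∧ b = u) ∨
      ∃ i j, M'.Adj i j ∧ f i = a ∧ f j = b) := fun _ _ => Iff.rfl
  have hMuv : M.Adj u v := (hMadj u v).2 (Or.inl ⟨rfl, rfl⟩)
  have hMm : M.IsMatching := by
    intro a ha
    rw [Set.mem_union, Set.mem_insert_iff, Set.mem_singleton_iff, Set.mem_image] at ha
    rcases ha with ⟨i, hi, rfl⟩ | ha | ha
    · obtain ⟨j, hj, hjun⟩ := hM'm hi
      refine ⟨f j, (hMadj _ _).2 (Or.inr (Or.inr ⟨i, j, hj, rfl, rfl⟩)), ?_⟩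
      intro y hy
      rcases (hMadj _ _).1 hy with ⟨hfi, -⟩ | ⟨hfi, -⟩ | ⟨i', j', hij', hfi, rfl⟩
      · exact absurd hfi (hfu i)
      · exact absurd hfi (hfv i)
      · have hii : i' = i := hfinj hfi
        subst hii
        rw [hjun j' hij']
    · refine ⟨v, (hMadj _ _).2 (Or.inl ⟨ha, rfl⟩), ?_⟩
      intro y hy
      rcases (hMadj _ _).1 hy with ⟨-, h2⟩ | ⟨h1, -⟩ | ⟨i, j, -, hfi, -⟩
      · exact h2
      · exact absurd (ha.symm.trans h1) hne
      · exact absurd (hfi.trans ha) (hfu i)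
    · refine ⟨u, (hMadj _ _).2 (Or.inr (Or.inl ⟨ha, rfl⟩)), ?_⟩
      intro y hy
      rcases (hMadj _ _).1 hy with ⟨h1, -⟩ | ⟨-, h2⟩ | ⟨i, j, -, hfi, -⟩
      · exact absurd (h1.symm.trans ha) hne
      · exact h2
      · exact absurd (hfi.trans ha) (hfv i)
  have hv₀M : v₀ ∉ M.support := by
    rw [SimpleGraph.Subgraph.mem_support]
    rintro ⟨y, hy⟩
    rcases (hMadj _ _).1 hy with ⟨h1, -⟩ | ⟨h1, -⟩ | ⟨i, j, hij, hfi, -⟩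
    · exact hu0 h1.symm
    · exact hv0 h1.symm
    · have hiw : i = w₀ := hfinj (by rw [hfi, hfw₀])
      exact hw₀s (M'.mem_support.2 ⟨j, hiw ▸ hij⟩)
  let Dt : Finset (V × V) := D'.image (Prod.map f f)
  let Eu : Finset (V × V) := ((G.neighborFinset u).erase v).image (fun x => (u, x))
  let Ev : Finset (V × V) := ((G.neighborFinset v).erase u).image (fun x => (v, x))
  let D : Finset (V × V) := Dt ∪ (Eu ∪ Ev)
  have hDt_mem : ∀ a b : V, (a, b) ∈ Dt ↔ ∃ i j, (i, j) ∈ D' ∧ f i = a ∧ f j = b := by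
    intro a b
    constructor
    · intro h
      obtain ⟨⟨i, j⟩, hij, hfij⟩ := Finset.mem_image.1 h
      simp only [Prod.map, Prod.mk.injEq] at hfij
      exact ⟨i, j, hij, hfij.1, hfij.2⟩
    · rintro ⟨i, j, hij, rfl, rfl⟩
      exact Finset.mem_image.2 ⟨(i, j), hij, rfl⟩
  have hEu_mem : ∀ a b : V, (a, b) ∈ Eu ↔ a = u ∧ b ∈ (G.neighborFinset u).erase v := by
    intro a b
    constructor
    · intro h
      obtain ⟨x, hx, hxe⟩ := Finset.mem_image.1 h
      rw [Prod.mk.injEq] at hxe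
      exact ⟨hxe.1.symm, hxe.2 ▸ hx⟩
    · rintro ⟨h1, hb⟩
      exact Finset.mem_image.2 ⟨b, hb, by rw [h1]⟩
  have hEv_mem : ∀ a b : V, (a, b) ∈ Ev ↔ a = v ∧ b ∈ (G.neighborFinset v).erase u := by
    intro a b
    constructor
    · intro h
      obtain ⟨x, hx, hxe⟩ := Finset.mem_image.1 h
      rw [Prod.mk.injEq] at hxe
      exact ⟨hxe.1.symm, hxe.2 ▸ hx⟩
    · rintro ⟨h1, hb⟩
      exact Finset.mem_image.2 ⟨b, hb, by rw [h1]⟩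
  have hDtco : ∀ p ∈ Dt, p.1 ≠ u ∧ p.1 ≠ v ∧ p.2 ≠ u ∧ p.2 ≠ v := by
    rintro ⟨a, b⟩ hp
    obtain ⟨i, j, -, rfl, rfl⟩ := (hDt_mem a b).1 hp
    exact ⟨hfu i, hfv i, hfu j, hfv j⟩
  have hEco : ∀ p ∈ Eu ∪ Ev, (p.1 = u ∨ p.1 = v) ∧ p.2 ≠ u ∧ p.2 ≠ v := by
    rintro ⟨a, b⟩ hp
    rcases Finset.mem_union.1 hp with h | h
    · obtain ⟨h1, hb⟩ := (hEu_mem a b).1 h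
      have hadj : G.Adj u b := (hNmem u b).1 (Finset.mem_of_mem_erase hb)
      exact ⟨Or.inl h1, fun h' => G.loopless.irrefl u (h' ▸ hadj), Finset.ne_of_mem_erase hb⟩
    · obtain ⟨h1, hb⟩ := (hEv_mem a b).1 h
      have hadj : G.Adj v b := (hNmem v b).1 (Finset.mem_of_mem_erase hb)
      exact ⟨Or.inr h1, Finset.ne_of_mem_erase hb, fun h' => G.loopless.irrefl v (h' ▸ hadj)⟩
  have hDadj : ∀ a b : V, (a, b) ∈ D → G.Adj a b ∧ ¬ M.Adj a b := by
    intro a b hab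
    rcases Finset.mem_union.1 hab with hab | hab
    · obtain ⟨i, j, hij, rfl, rfl⟩ := (hDt_mem _ _).1 hab
      have hdel : (H.deleteEdges M'.edgeSet).Adj i j := (hD'or.1 i j).2 (Or.inl hij)
      rw [SimpleGraph.deleteEdges_adj] at hdel
      refine ⟨hdel.1, ?_⟩
      intro hM
      rcases (hMadj _ _).1 hM with ⟨hfi, -⟩ | ⟨hfi, -⟩ | ⟨i', j', hij', hfi, hfj⟩
      · exact hfu i hfi
      · exact hfv i hfi
      · exact hdel.2 (SimpleGraph.Subgraph.mem_edgeSet.2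
          (by rwa [hfinj hfi, hfinj hfj] at hij'))
    · rcases Finset.mem_union.1 hab with h | h
      · obtain ⟨h1, hb⟩ := (hEu_mem _ _).1 h
        have hadj : G.Adj u b := (hNmem u b).1 (Finset.mem_of_mem_erase hb)
        refine ⟨h1.symm ▸ hadj, ?_⟩
        intro hM
        rcases (hMadj _ _).1 hM with ⟨-, h2⟩ | ⟨h2, -⟩ | ⟨i, j, -, hfi, -⟩
        · exact Finset.ne_of_mem_erase hb h2
        · exact hne (h1.symm.trans h2)
        · exact hfu i (hfi.trans h1)
      · obtain ⟨h1, hb⟩ := (hEv_mem _ _).1 h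
        have hadj : G.Adj v b := (hNmem v b).1 (Finset.mem_of_mem_erase hb)
        refine ⟨h1.symm ▸ hadj, ?_⟩
        intro hM
        rcases (hMadj _ _).1 hM with ⟨h2, -⟩ | ⟨-, h2⟩ | ⟨i, j, -, hfi, -⟩
        · exact hne (h2.symm.trans h1)
        · exact Finset.ne_of_mem_erase hb h2
        · exact hfv i (hfi.trans h1)
  have hadjD : ∀ a b : V, G.Adj a b → ¬ M.Adj a b → (a, b) ∈ D ∨ (b, a) ∈ D := by
    intro a b hab hnM
    by_cases hau : a = u
    · have hbv : b ≠ v := fun h => hnM ((hMadj _ _).2 (Or.inl ⟨hau, h⟩))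
      exact Or.inl (Finset.mem_union_right _ (Finset.mem_union_left _
        ((hEu_mem _ _).2 ⟨hau, Finset.mem_erase.2 ⟨hbv, (hNmem u b).2 (hau ▸ hab)⟩⟩)))
    by_cases hav : a = v
    · have hbu : b ≠ u := fun h => hnM ((hMadj _ _).2 (Or.inr (Or.inl ⟨hav, h⟩)))
      exact Or.inl (Finset.mem_union_right _ (Finset.mem_union_right _
        ((hEv_mem _ _).2 ⟨hav, Finset.mem_erase.2 ⟨hbu, (hNmem v b).2 (hav ▸ hab)⟩⟩)))
    by_cases hbu : b = u
    · exact Or.inr (Finset.mem_union_right _ (Finset.mem_union_left _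
        ((hEu_mem _ _).2 ⟨hbu, Finset.mem_erase.2 ⟨hav, (hNmem u a).2 (hbu ▸ hab.symm)⟩⟩)))
    by_cases hbv : b = v
    · exact Or.inr (Finset.mem_union_right _ (Finset.mem_union_right _
        ((hEv_mem _ _).2 ⟨hbv, Finset.mem_erase.2 ⟨hau, (hNmem v a).2 (hbv ▸ hab.symm)⟩⟩)))
    · obtain ⟨i, rfl⟩ := hfr a hau hav
      obtain ⟨j, rfl⟩ := hfr b hbu hbv
      have hnM' : ¬ M'.Adj i j := fun h =>
        hnM ((hMadj _ _).2 (Or.inr (Or.inr ⟨i, j, h, rfl, rfl⟩)))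
      have hdel : (H.deleteEdges M'.edgeSet).Adj i j := by
        rw [SimpleGraph.deleteEdges_adj]
        exact ⟨hab, fun h => hnM' (SimpleGraph.Subgraph.mem_edgeSet.1 h)⟩
      rcases (hD'or.1 i j).1 hdel with h | h
      · exact Or.inl (Finset.mem_union_left _ ((hDt_mem _ _).2 ⟨i, j, h, rfl, rfl⟩))
      · exact Or.inr (Finset.mem_union_left _ ((hDt_mem _ _).2 ⟨j, i, h, rfl, rfl⟩))
  have horient : IsOrientation (G.deleteEdges M.edgeSet) D := by
    constructor
    · intro a b
      constructor
      · intro h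
        rw [SimpleGraph.deleteEdges_adj] at h
        exact hadjD a b h.1 (fun hm => h.2 (SimpleGraph.Subgraph.mem_edgeSet.2 hm))
      · rintro (h | h)
        · obtain ⟨h1, h2⟩ := hDadj a b h
          rw [SimpleGraph.deleteEdges_adj]
          exact ⟨h1, fun hm => h2 (SimpleGraph.Subgraph.mem_edgeSet.1 hm)⟩
        · obtain ⟨h1, h2⟩ := hDadj b a h
          rw [SimpleGraph.deleteEdges_adj]
          exact ⟨h1.symm, fun hm => h2 (SimpleGraph.Subgraph.mem_edgeSet.1 hm).symm⟩
    · rintro a b ⟨h1, h2⟩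
      rcases Finset.mem_union.1 h1 with h1 | h1
      · rcases Finset.mem_union.1 h2 with h2 | h2
        · obtain ⟨i, j, hij, hfi, hfj⟩ := (hDt_mem _ _).1 h1
          obtain ⟨i', j', hij', hfi', hfj'⟩ := (hDt_mem _ _).1 h2
          have hi' : i' = j := hfinj (by rw [hfi', hfj])
          have hj' : j' = i := hfinj (by rw [hfj', hfi])
          exact hD'or.2 i j ⟨hij, by rw [← hi', ← hj']; exact hij'⟩
        · rcases (hEco _ h2).1 with h | h
          · exact (hDtco _ h1).2.2.1 h
          · exact (hDtco _ h1).2.2.2 h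
      · rcases Finset.mem_union.1 h2 with h2 | h2
        · rcases (hEco _ h1).1 with h | h
          · exact (hDtco _ h2).2.2.1 h
          · exact (hDtco _ h2).2.2.2 h
        · rcases (hEco _ h1).1 with h | h
          · exact (hEco _ h2).2.1 h
          · exact (hEco _ h2).2.2 h
  have hAT : IsAT D := by
    show IsAT (Dt ∪ (Eu ∪ Ev))
    apply isAT_union_sources Dt (Eu ∪ Ev) (fun x => x = u ∨ x = v)
    · rintro p hp
      rcases Finset.mem_union.1 hp with h | h
      · rintro (h' | h')
        · exact (hDtco _ h).2.2.1 h'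
        · exact (hDtco _ h).2.2.2 h'
      · rintro (h' | h')
        · exact (hEco _ h).2.1 h'
        · exact (hEco _ h).2.2 h'
    · exact fun p hp => (hEco _ hp).1
    · exact isAT_image hfinj D' hD'AT
  have hEu1 : ∀ p ∈ Eu, p.1 = u := by
    rintro ⟨a, b⟩ hp
    exact ((hEu_mem a b).1 hp).1
  have hEv1 : ∀ p ∈ Ev, p.1 = v := by
    rintro ⟨a, b⟩ hp
    exact ((hEv_mem a b).1 hp).1
  have hfilter : ∀ x : V, Finset.filter (fun a => a.1 = x) D =
      Finset.filter (fun a => a.1 = x) Dt ∪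
        (Finset.filter (fun a => a.1 = x) Eu ∪ Finset.filter (fun a => a.1 = x) Ev) := by
    intro x
    show Finset.filter (fun a => a.1 = x) (Dt ∪ (Eu ∪ Ev)) = _
    rw [Finset.filter_union, Finset.filter_union]
  have hDtfilter : ∀ x : V, x = u ∨ x = v → Finset.filter (fun a => a.1 = x) Dt = ∅ := by
    intro x hx
    rw [Finset.filter_eq_empty_iff]
    intro p hp h'
    rcases hx with h | h
    · exact (hDtco p hp).1 (h'.trans h)
    · exact (hDtco p hp).2.1 (h'.trans h)
  have hEufilter_ne : ∀ x : V, x ≠ u → Finset.filter (fun a => a.1 = x) Eu = ∅ := by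
    intro x hx
    rw [Finset.filter_eq_empty_iff]
    intro p hp h'
    exact hx (by rw [← h']; exact hEu1 p hp)
  have hEvfilter_ne : ∀ x : V, x ≠ v → Finset.filter (fun a => a.1 = x) Ev = ∅ := by
    intro x hx
    rw [Finset.filter_eq_empty_iff]
    intro p hp h'
    exact hx (by rw [← h']; exact hEv1 p hp)
  have hEucard : Eu.card = 2 := by
    show (((G.neighborFinset u).erase v).image (fun x => (u, x))).card = 2
    rw [Finset.card_image_of_injective _ (fun a b h => (Prod.ext_iff.1 h).2),
      Finset.card_erase_of_mem ((hNmem u v).2 huv),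
      SimpleGraph.card_neighborFinset_eq_degree, hdu]
  have hEvcard : Ev.card = 2 := by
    show (((G.neighborFinset v).erase u).image (fun x => (v, x))).card = 2
    rw [Finset.card_image_of_injective _ (fun a b h => (Prod.ext_iff.1 h).2),
      Finset.card_erase_of_mem ((hNmem v u).2 huv.symm),
      SimpleGraph.card_neighborFinset_eq_degree, hdv]
  have houtu : outdeg D u = 2 := by
    show (Finset.filter (fun a => a.1 = u) D).card = 2
    rw [hfilter u, hDtfilter u (Or.inl rfl), hEvfilter_ne u hne,
      Finset.filter_true_of_mem hEu1, Finset.empty_union, Finset.union_empty, hEucard]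
  have houtv : outdeg D v = 2 := by
    show (Finset.filter (fun a => a.1 = v) D).card = 2
    rw [hfilter v, hDtfilter v (Or.inr rfl), hEufilter_ne v (Ne.symm hne),
      Finset.filter_true_of_mem hEv1, Finset.empty_union, Finset.empty_union, hEvcard]
  have houtother : ∀ x : V, x ≠ u → x ≠ v → outdeg D x = outdeg Dt x := by
    intro x hxu hxv
    show (Finset.filter (fun a => a.1 = x) D).card = (Finset.filter (fun a => a.1 = x) Dt).card
    rw [hfilter x, hEufilter_ne x hxu, hEvfilter_ne x hxv, Finset.union_empty,
      Finset.union_empty]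
  have houtlt : ∀ x, outdeg D x < 3 := by
    intro x
    by_cases hxu : x = u
    · rw [hxu, houtu]; norm_num
    by_cases hxv : x = v
    · rw [hxv, houtv]; norm_num
    · obtain ⟨i, rfl⟩ := hfr x hxu hxv
      rw [houtother _ hxu hxv]
      show outdeg (D'.image (Prod.map f f)) (f i) < 3
      rw [outdeg_image hfinj]
      exact hD'out i
  have houtv₀ : outdeg D v₀ = 0 := by
    rw [houtother v₀ (Ne.symm hu0) (Ne.symm hv0)]
    show outdeg (D'.image (Prod.map f f)) v₀ = 0
    rw [← hfw₀, outdeg_image hfinj]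
    exact hD'v₀
  exact hcex ⟨M, hMm, hv₀M, D, horient, hAT, houtlt, houtv₀⟩
end

section
/- Let D be an orientation of a graph G, let X ⊆ V(G) be such that every arc between X and V(G) − X is directed from X to V(G) − X, and suppose the induced sub-digraph D[X] is acyclic. Then D is Alon–Tarsi if and only if D[V(G) − X] is Alon–Tarsi. -/
/-!
An Eulerian sub-digraph cannot use an arc leaving `X`: since no arc enters `X` from outside, a
vertex of `X` with an out-arc would need an in-arc from inside `X`, and following such in-arcs
backwards inside the acyclic `D[X]` never terminates. Hence `D` and `D[V − X]` have the same
spanning Eulerian sub-digraphs, and so the same `diffAT`.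
-/

open Relation

theorem wellFounded_of_forall_not_reflTransGen {α : Type*} [Finite α] {r : α → α → Prop}
    (hacyc : ∀ u v, r u v → ¬ ReflTransGen r v u) : WellFounded r := by
  have : Std.Irrefl (TransGen r) := ⟨fun a h => by
    obtain ⟨b, hab, hba⟩ := TransGen.head'_iff.1 h
    exact hacyc a b hab hba⟩
  exact Subrelation.wf TransGen.single (Finite.wellFounded_of_trans_of_irrefl _)

section Eulerian

variable {V : Type*} [DecidableEq V]

theorem exists_snd_eq_of_indeg_eq_outdeg {A : Finset (V × V)} {v w : V}
    (hbal : indeg A v = outdeg A v) (hvw : (v, w) ∈ A) : ∃ a ∈ A, a.2 = v := by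
  have hout : 0 < outdeg A v := Finset.card_pos.2 ⟨(v, w), Finset.mem_filter.2 ⟨hvw, rfl⟩⟩
  obtain ⟨a, ha⟩ := Finset.card_pos.1 (hbal ▸ hout)
  exact ⟨a, (Finset.mem_filter.1 ha).1, (Finset.mem_filter.1 ha).2⟩

variable [Fintype V]

theorem mem_eulerSubs {D A : Finset (V × V)} :
    A ∈ eulerSubs D ↔ A ⊆ D ∧ ∀ v, indeg A v = outdeg A v := by
  rw [eulerSubs, Finset.mem_filter, Finset.mem_powerset]

theorem eulerSubs_filter_of_forall {D : Finset (V × V)} {p : V × V → Prop} [DecidablePred p]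
    (h : ∀ A ∈ eulerSubs D, ∀ a ∈ A, p a) : eulerSubs (D.filter p) = eulerSubs D := by
  ext A
  refine ⟨fun hA => ?_, fun hA => ?_⟩
  · obtain ⟨hAD, hbal⟩ := mem_eulerSubs.1 hA
    exact mem_eulerSubs.2 ⟨hAD.trans (Finset.filter_subset _ _), hbal⟩
  · obtain ⟨hAD, hbal⟩ := mem_eulerSubs.1 hA
    exact mem_eulerSubs.2 ⟨fun a ha => Finset.mem_filter.2 ⟨hAD ha, h A hA a ha⟩, hbal⟩

variable {D A : Finset (V × V)} {X : Finset V}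

theorem fst_notMem_and_snd_notMem_of_mem_eulerSubs (harc : ∀ a ∈ D, ¬(a.1 ∉ X ∧ a.2 ∈ X))
    (hwf : WellFounded fun x y : V => (x, y) ∈ D.filter (fun a => a.1 ∈ X ∧ a.2 ∈ X))
    (hA : A ∈ eulerSubs D) : ∀ a ∈ A, a.1 ∉ X ∧ a.2 ∉ X := by
  obtain ⟨hAD, hbal⟩ := mem_eulerSubs.1 hA
  have htail : ∀ v ∈ X, ∀ w, (v, w) ∉ A := by
    intro v
    induction v using hwf.induction with
    | _ v ih =>
      intro hv w hvw
      obtain ⟨a, haA, rfl⟩ := exists_snd_eq_of_indeg_eq_outdeg (hbal v) hvw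
      have haX : a.1 ∈ X := not_not.1 fun h => harc a (hAD haA) ⟨h, hv⟩
      exact ih a.1 (Finset.mem_filter.2 ⟨hAD haA, haX, hv⟩) haX a.2 haA
  intro a ha
  have h1 : a.1 ∉ X := fun h => htail a.1 h a.2 ha
  exact ⟨h1, fun h2 => harc a (hAD ha) ⟨h1, h2⟩⟩

end Eulerian

theorem isAT_iff_of_acyclic_part_general {V : Type*} [Fintype V] [DecidableEq V]
    (D : Finset (V × V))
    (X : Finset V) (harc : ∀ a ∈ D, ¬(a.1 ∉ X ∧ a.2 ∈ X))
    (hacyc : ∀ u v : V, (u, v) ∈ D.filter (fun a => a.1 ∈ X ∧ a.2 ∈ X) →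
      ¬ Relation.ReflTransGen
        (fun x y : V => (x, y) ∈ D.filter (fun a => a.1 ∈ X ∧ a.2 ∈ X)) v u) :
    IsAT D ↔ IsAT (D.filter fun a => a.1 ∉ X ∧ a.2 ∉ X) := by
  have hsame : eulerSubs (D.filter fun a => a.1 ∉ X ∧ a.2 ∉ X) = eulerSubs D :=
    eulerSubs_filter_of_forall fun _ hA => fst_notMem_and_snd_notMem_of_mem_eulerSubs harc
      (wellFounded_of_forall_not_reflTransGen hacyc) hA
  rw [IsAT, IsAT, diffAT, diffAT, hsame]

/-- If all arcs between `X` and its complement go out of `X` and `D[X]` is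
acyclic, then `D` is Alon–Tarsi iff `D[V − X]` is Alon–Tarsi. -/
theorem isAT_iff_of_acyclic_part {V : Type*} [Fintype V] [DecidableEq V]
    (G : SimpleGraph V) (D : Finset (V × V)) (hor : IsOrientation G D)
    (X : Finset V) (harc : ∀ a ∈ D, ¬(a.1 ∉ X ∧ a.2 ∈ X))
    (hacyc : ∀ u v : V, (u, v) ∈ D.filter (fun a => a.1 ∈ X ∧ a.2 ∈ X) →
      ¬ Relation.ReflTransGen
        (fun x y : V => (x, y) ∈ D.filter (fun a => a.1 ∈ X ∧ a.2 ∈ X)) v u) :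
    IsAT D ↔ IsAT (D.filter fun a => a.1 ∉ X ∧ a.2 ∉ X) :=
  isAT_iff_of_acyclic_part_general D X harc hacyc
end
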